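/- The function (u,v) ↦ g(𝐤(u,v)) is constant on (0, 3/10) × (3/5, 1); that is, g takes the same value at every point of the surface Π. -/

import Mathlib

open Set

/-- `h(x) = (x^x (1−x)^{1−x})⁻¹` (real powers). -/
noncomputable def hfun (x : ℝ) : ℝ := (x ^ x * (1 - x) ^ (1 - x))⁻¹

/-- The function `g = log G` from the LDA posterior analysis. -/
noncomputable def gfun (a b c d : ℝ) : ℝ :=
  2 * Real.log (hfun ((a + b + c + d) / 2))
    + (3/10) * Real.log (hfun (10 * a / 3)) + (7/10) * Real.log (hfun (10 * b / 7))
    + (3/5) * Real.log (hfun (5 * c / 3)) + (2/5) * Real.log (hfun (5 * d / 2))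
    - (9/10) * Real.log (hfun (10 * (a + c) / 9))
    - (11/10) * Real.log (hfun (10 * (b + d) / 11))
    - Real.log (hfun (a + b)) - Real.log (hfun (c + d))

/-- First coordinate of the parametrization `𝐤(u,v)` of the surface `Π`. -/
noncomputable def kk1 (u v : ℝ) : ℝ := u * (v - 3/10) / (v - u)
/-- Second coordinate of `𝐤(u,v)`. -/
noncomputable def kk2 (u v : ℝ) : ℝ := (1 - u) * (v - 3/10) / (v - u)
/-- Third coordinate of `𝐤(u,v)`. -/
noncomputable def kk3 (u v : ℝ) : ℝ := u * (v - 3/5) / (v - u)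
/-- Fourth coordinate of `𝐤(u,v)`. -/
noncomputable def kk4 (u v : ℝ) : ℝ := (1 - u) * (v - 3/5) / (v - u)

lemma logh (x : ℝ) (h0 : 0 < x) (h1 : x < 1) :
    Real.log (hfun x) = -(x * Real.log x) - (1 - x) * Real.log (1 - x) := by
  have h1x : 0 < 1 - x := by linarith
  unfold hfun
  rw [Real.log_inv,
    Real.log_mul (Real.rpow_pos_of_pos h0 x).ne' (Real.rpow_pos_of_pos h1x (1 - x)).ne',
    Real.log_rpow h0, Real.log_rpow h1x]
  ring

lemma core (w D N M : ℝ) (hw : 0 < w) (hD : 0 < D) (hN : 0 < N) (hM : 0 < M)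
    (hsum : N + M = w * D) :
    w * Real.log (hfun (N / (w * D))) =
      w * Real.log w + w * Real.log D - (N / D) * Real.log N - (M / D) * Real.log M := by
  have hwD : 0 < w * D := mul_pos hw hD
  have h0 : 0 < N / (w * D) := div_pos hN hwD
  have h1 : N / (w * D) < 1 := (div_lt_one hwD).2 (by linarith)
  rw [logh _ h0 h1]
  have h1x : 1 - N / (w * D) = M / (w * D) := by field_simp; linarith
  rw [h1x, Real.log_div hN.ne' hwD.ne', Real.log_div hM.ne' hwD.ne',
    Real.log_mul hw.ne' hD.ne']
  have hM' : M = w * D - N := by linarith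
  subst hM'
  field_simp
  ring

lemma key (w D n1 n2 m1 m2 : ℝ) (hw : 0 < w) (hD : 0 < D)
    (hn1 : 0 < n1) (hn2 : 0 < n2) (hm1 : 0 < m1) (hm2 : 0 < m2)
    (hsum : n1 * n2 + m1 * m2 = w * D) :
    w * Real.log (hfun (n1 * n2 / (w * D))) =
      w * Real.log w + w * Real.log D
        - (n1 * n2 / D) * (Real.log n1 + Real.log n2)
        - (m1 * m2 / D) * (Real.log m1 + Real.log m2) := by
  rw [core w D (n1 * n2) (m1 * m2) hw hD (mul_pos hn1 hn2) (mul_pos hm1 hm2) hsum,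
    Real.log_mul hn1.ne' hn2.ne', Real.log_mul hm1.ne' hm2.ne']

lemma key1 (D n m : ℝ) (hD : 0 < D) (hn : 0 < n) (hm : 0 < m) (hsum : n + m = D) :
    Real.log (hfun (n / D)) =
      Real.log D - (n / D) * Real.log n - (m / D) * Real.log m := by
  have h0 : 0 < n / D := div_pos hn hD
  have h1 : n / D < 1 := (div_lt_one hD).2 (by linarith)
  rw [logh _ h0 h1]
  have h1x : 1 - n / D = m / D := by field_simp; linarith
  rw [h1x, Real.log_div hn.ne' hD.ne', Real.log_div hm.ne' hD.ne']
  have hm' : m = D - n := by linarith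
  subst hm'
  field_simp
  ring

set_option maxHeartbeats 2000000 in
/-- `g` is constant on the surface `Π`, i.e. the map
`(u,v) ↦ g(𝐤(u,v))` takes a single value on `(0,3/10) × (3/5,1)`. -/
theorem g_constant_on_Pi :
    ∃ C : ℝ, ∀ u v : ℝ, u ∈ Ioo (0:ℝ) (3/10) → v ∈ Ioo (3/5:ℝ) 1 →
      gfun (kk1 u v) (kk2 u v) (kk3 u v) (kk4 u v) = C := by
  refine ⟨2 * Real.log 2 + (3/10) * Real.log (3/10) + (7/10) * Real.log (7/10)
      + (3/5) * Real.log (3/5) + (2/5) * Real.log (2/5)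
      - (9/10) * Real.log (9/10) - (11/10) * Real.log (11/10), ?_⟩
  intro u v hu hv
  obtain ⟨hu0, hu3⟩ := hu
  obtain ⟨hv3, hv1⟩ := hv
  have hD : (0:ℝ) < v - u := by linarith
  have hDne : (v - u) ≠ 0 := hD.ne'
  have hv0 : (0:ℝ) < v := by linarith
  have h1u : (0:ℝ) < 1 - u := by linarith
  have h1v : (0:ℝ) < 1 - v := by linarith
  have hs : (0:ℝ) < v - 3/10 := by linarith
  have ht : (0:ℝ) < v - 3/5 := by linarith
  have hsg : (0:ℝ) < 2*v - 9/10 := by linarith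
  have hp : (0:ℝ) < 3/10 - u := by linarith
  have hq : (0:ℝ) < 3/5 - u := by linarith
  have hr : (0:ℝ) < 9/10 - 2*u := by linarith
  simp only [gfun, kk1, kk2, kk3, kk4]
  have e1 : (u * (v - 3/10) / (v - u) + (1 - u) * (v - 3/10) / (v - u)
      + u * (v - 3/5) / (v - u) + (1 - u) * (v - 3/5) / (v - u)) / 2
      = (2*v - 9/10) / (2 * (v - u)) := by field_simp; ring
  have e2 : 10 * (u * (v - 3/10) / (v - u)) / 3
      = u * (v - 3/10) / ((3/10) * (v - u)) := by field_simp
  have e3 : 10 * ((1 - u) * (v - 3/10) / (v - u)) / 7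
      = (1 - u) * (v - 3/10) / ((7/10) * (v - u)) := by field_simp
  have e4 : 5 * (u * (v - 3/5) / (v - u)) / 3
      = u * (v - 3/5) / ((3/5) * (v - u)) := by field_simp
  have e5 : 5 * ((1 - u) * (v - 3/5) / (v - u)) / 2
      = (1 - u) * (v - 3/5) / ((2/5) * (v - u)) := by field_simp
  have e6 : 10 * (u * (v - 3/10) / (v - u) + u * (v - 3/5) / (v - u)) / 9
      = u * (2*v - 9/10) / ((9/10) * (v - u)) := by field_simp; ring
  have e7 : 10 * ((1 - u) * (v - 3/10) / (v - u) + (1 - u) * (v - 3/5) / (v - u)) / 11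
      = (1 - u) * (2*v - 9/10) / ((11/10) * (v - u)) := by field_simp; ring
  have e8 : u * (v - 3/10) / (v - u) + (1 - u) * (v - 3/10) / (v - u)
      = (v - 3/10) / (v - u) := by field_simp; ring
  have e9 : u * (v - 3/5) / (v - u) + (1 - u) * (v - 3/5) / (v - u)
      = (v - 3/5) / (v - u) := by field_simp; ring
  rw [e1, e2, e3, e4, e5, e6, e7, e8, e9]
  rw [core 2 (v - u) (2*v - 9/10) (9/10 - 2*u) (by norm_num) hD hsg hr (by ring),
    key (3/10) (v - u) u (v - 3/10) v (3/10 - u) (by norm_num) hD hu0 hs hv0 hp (by ring),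
    key (7/10) (v - u) (1 - u) (v - 3/10) (1 - v) (3/10 - u) (by norm_num) hD h1u hs h1v hp (by ring),
    key (3/5) (v - u) u (v - 3/5) v (3/5 - u) (by norm_num) hD hu0 ht hv0 hq (by ring),
    key (2/5) (v - u) (1 - u) (v - 3/5) (1 - v) (3/5 - u) (by norm_num) hD h1u ht h1v hq (by ring),
    key (9/10) (v - u) u (2*v - 9/10) v (9/10 - 2*u) (by norm_num) hD hu0 hsg hv0 hr (by ring),
    key (11/10) (v - u) (1 - u) (2*v - 9/10) (1 - v) (9/10 - 2*u) (by norm_num) hD h1u hsg h1v hr (by ring),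
    key1 (v - u) (v - 3/10) (3/10 - u) hD hs hp (by ring),
    key1 (v - u) (v - 3/5) (3/5 - u) hD ht hq (by ring)]
  field_simp
  ring
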